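/- Let ≿ be a complete transitive continuous relation satisfying betweenness on a nonempty compact convex subset X of a Hausdorff topological real vector space, and suppose there exist x, y with x ≻ y (nondegeneracy). Then ≿ admits an implicit mixture-linear representation: there exists u : X × [0,1] → ℝ such that (i) u(·,t) is continuous and mixture-linear for each t ∈ (0,1); (ii) u(x,·) is continuous on (0,1) for each x; (iii) there exist x*, x_* with u(x*,t) = 1 and u(x_*,t) = 0 for all t ∈ [0,1]; (iv) for each x there is a unique t ∈ [0,1] with t = u(x,t); (v) the continuous function U with U(x) = u(x,U(x)) represents ≿. -/

import Mathlib

/-!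
Let `xs` and `xl` be a best and a worst element (compactness and continuity). The relation is
represented by `U x ∈ [0, 1]`, the weight with `x ∼ U x • xs + (1 - U x) • xl`; it is continuous
because contour sets are closed. Betweenness makes `U` strictly monotone along every segment
joining two non-indifferent points and constant along every segment joining two indifferent ones,
so each indifference set `I_t = {U = t}` is convex.

For `t ∈ (0, 1)`, `u (·, t)` is the affine function that vanishes at `xl`, equals `1` at `xs` and
`t` on `I_t`: if `x` lies above `I_t`, the segment from `xl` to `x` meets `I_t` at some
`λ • x + (1 - λ) • xl`, and `u (x, t) = t / λ`; below `I_t` one uses the segment to `xs`. Mixing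
points of `I_t` stays in `I_t`, which gives mixture-linearity; `u (x, t) - t` has the sign of
`U x - t`, so `U x` is the unique fixed point of `u (x, ·)`; and `λ`, being the unique solution of
a continuous equation with values in `[0, 1]`, depends continuously on `(x, t)`.
-/

open Set

open Filter Topology

section Betweenness

variable {E : Type*} [AddCommGroup E] [Module ℝ E] {X : Set E}

theorem Convex.mix_mem (hX : Convex ℝ X) {x y : E} (hx : x ∈ X) (hy : y ∈ X) {l : ℝ}
    (hl : l ∈ Icc (0 : ℝ) 1) : l • x + (1 - l) • y ∈ X :=
  hX hx hy hl.1 (sub_nonneg.2 hl.2) (add_sub_cancel _ _)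

def Betweenness (X : Set E) (s : E → E → Prop) : Prop :=
  ∀ x ∈ X, ∀ y ∈ X, ∀ l ∈ Ioo (0 : ℝ) 1, s x y →
    s x (l • x + (1 - l) • y) ∧ s (l • x + (1 - l) • y) y

theorem Betweenness.mix_of_lt {s : E → E → Prop} (hs : Betweenness X s) (hX : Convex ℝ X)
    {x y : E} (hx : x ∈ X) (hy : y ∈ X) (hxy : s x y) {l l' : ℝ} (hl' : 0 ≤ l') (hll' : l' < l)
    (hl : l ≤ 1) : s (l • x + (1 - l) • y) (l' • x + (1 - l') • y) := by
  have hl0 : 0 < l := hl'.trans_lt hll'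
  have hmy : s (l • x + (1 - l) • y) y := by
    rcases hl.lt_or_eq with hl1 | rfl
    · exact (hs x hx y hy l ⟨hl0, hl1⟩ hxy).2
    · simpa using hxy
  rcases hl'.eq_or_lt with rfl | hl'0
  · simpa using hmy
  have key := (hs _ (hX.mix_mem hx hy ⟨hl0.le, hl⟩) y hy (l' / l)
    ⟨div_pos hl'0 hl0, (div_lt_one hl0).2 hll'⟩ hmy).1
  have hmix : l' • x + (1 - l') • y = (l' / l) • (l • x + (1 - l) • y) + (1 - l' / l) • y := by
    match_scalars <;> field_simp; ring
  rwa [hmix]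

end Betweenness

section Topology

variable {Y Z W : Type*} [TopologicalSpace Y] [TopologicalSpace Z] [TopologicalSpace W]

theorem continuousOn_of_unique_solution [T2Space W] {s : Set Y} {K : Set Z} (hK : IsCompact K)
    {G : Y × Z → W} (hG : ContinuousOn G (s ×ˢ K)) {τ : Y → W} (hτ : ContinuousOn τ s)
    {f : Y → Z} (hf : MapsTo f s K) (hsol : ∀ y ∈ s, G (y, f y) = τ y)
    (huniq : ∀ y ∈ s, ∀ c ∈ K, G (y, c) = τ y → c = f y) : ContinuousOn f s := by
  intro y₀ hy₀
  rw [ContinuousWithinAt, tendsto_iff_ultrafilter]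
  intro 𝒰 h𝒰
  have hs : ∀ᶠ y in (𝒰 : Filter Y), y ∈ s := h𝒰 self_mem_nhdsWithin
  obtain ⟨c, hc, hfc⟩ := hK.ultrafilter_le_nhds (Ultrafilter.map f 𝒰)
    (le_principal_iff.2 (mem_map.2 (hs.mono hf)))
  have hfc' : Tendsto f 𝒰 (𝓝 c) := hfc
  have hpair : Tendsto (fun y => (y, f y)) 𝒰 (𝓝[s ×ˢ K] (y₀, c)) :=
    tendsto_nhdsWithin_iff.2 ⟨(tendsto_id'.2 (h𝒰.trans nhdsWithin_le_nhds)).prodMk_nhds hfc',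
      hs.mono fun y hy => ⟨hy, hf hy⟩⟩
  have hGlim : Tendsto (fun y => G (y, f y)) 𝒰 (𝓝 (G (y₀, c))) :=
    (hG _ ⟨hy₀, hc⟩).tendsto.comp hpair
  have hτlim : Tendsto (fun y => G (y, f y)) 𝒰 (𝓝 (τ y₀)) :=
    ((hτ y₀ hy₀).tendsto.mono_left h𝒰).congr' (hs.mono fun y hy => (hsol y hy).symm)
  rwa [huniq y₀ hy₀ c hc (tendsto_nhds_unique hGlim hτlim)] at hfc'

theorem continuousOn_of_nonpos_of_nonneg {f : Y → Z} {g : Y → ℝ} {s : Set Y}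
    (hg : ContinuousOn g s) (h₁ : ContinuousOn f {y ∈ s | g y ≤ 0})
    (h₂ : ContinuousOn f {y ∈ s | 0 ≤ g y}) : ContinuousOn f s := by
  intro y hy
  rcases lt_trichotomy (g y) 0 with hneg | hzero | hpos
  · refine (h₁ y ⟨hy, hneg.le⟩).mono_of_mem_nhdsWithin ?_
    filter_upwards [(hg y hy).eventually_lt_const hneg, self_mem_nhdsWithin] with w hw hws
    exact ⟨hws, hw.le⟩
  · exact ((h₁ y ⟨hy, hzero.le⟩).union (h₂ y ⟨hy, hzero.ge⟩)).mono fun w hw =>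
      (le_total (g w) 0).imp (⟨hw, ·⟩) (⟨hw, ·⟩)
  · refine (h₂ y ⟨hy, hpos.le⟩).mono_of_mem_nhdsWithin ?_
    filter_upwards [(hg y hy).eventually_const_lt hpos, self_mem_nhdsWithin] with w hw hws
    exact ⟨hws, hw.le⟩

theorem continuousOn_of_isClosed_contour {U : Y → ℝ} {X : Set Y} (hmaps : MapsTo U X (Icc 0 1))
    (hsurj : SurjOn U X (Icc 0 1)) (hle : ∀ y ∈ X, IsClosed {x ∈ X | U x ≤ U y})
    (hge : ∀ y ∈ X, IsClosed {x ∈ X | U y ≤ U x}) : ContinuousOn U X := by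
  intro x hx
  rw [ContinuousWithinAt, tendsto_order]
  refine ⟨fun b hb => ?_, fun b hb => ?_⟩
  · rcases lt_or_ge b 0 with hb0 | hb0
    · exact eventually_nhdsWithin_of_forall fun y hy => hb0.trans_le (hmaps hy).1
    obtain ⟨y, hy, rfl⟩ := hsurj ⟨hb0, hb.le.trans (hmaps hx).2⟩
    filter_upwards [mem_nhdsWithin_of_mem_nhds ((hle y hy).isOpen_compl.mem_nhds
      fun h => hb.not_ge h.2), self_mem_nhdsWithin] with w hw hwX
    exact lt_of_not_ge fun h => hw ⟨hwX, h⟩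
  · rcases le_or_gt b 1 with hb1 | hb1
    · obtain ⟨y, hy, rfl⟩ := hsurj ⟨(hmaps hx).1.trans hb.le, hb1⟩
      filter_upwards [mem_nhdsWithin_of_mem_nhds ((hge y hy).isOpen_compl.mem_nhds
        fun h => hb.not_ge h.2), self_mem_nhdsWithin] with w hw hwX
      exact lt_of_not_ge fun h => hw ⟨hwX, h⟩
    · exact eventually_nhdsWithin_of_forall fun y hy => (hmaps hy).2.trans_lt hb1

end Topology

section CalibratedUtility

variable {E : Type*} [AddCommGroup E] [Module ℝ E] [TopologicalSpace E]

structure IsCalibratedUtility (X : Set E) (U : E → ℝ) (xs xl : E) : Prop where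
  convex : Convex ℝ X
  continuousOn : ContinuousOn U X
  betweenness : Betweenness X fun x y => U y < U x
  mapsTo : MapsTo U X (Icc 0 1)
  high_mem : xs ∈ X
  low_mem : xl ∈ X
  apply_mix : ∀ t ∈ Icc (0 : ℝ) 1, U (t • xs + (1 - t) • xl) = t

namespace IsCalibratedUtility

variable {X : Set E} {U : E → ℝ} {xs xl x y : E} {t l : ℝ}

theorem apply_high (hU : IsCalibratedUtility X U xs xl) : U xs = 1 := by
  simpa using hU.apply_mix 1 (right_mem_Icc.2 zero_le_one)

theorem apply_low (hU : IsCalibratedUtility X U xs xl) : U xl = 0 := by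
  simpa using hU.apply_mix 0 (left_mem_Icc.2 zero_le_one)

theorem dual (hU : IsCalibratedUtility X U xs xl) :
    IsCalibratedUtility X (fun x => 1 - U x) xl xs where
  convex := hU.convex
  continuousOn := continuousOn_const.sub hU.continuousOn
  betweenness x hx y hy l hl hxy := by
    have h := hU.betweenness y hy x hx (1 - l) (Ioo.one_sub_mem hl) (by linarith)
    rw [show (1 - l) • y + (1 - (1 - l)) • x = l • x + (1 - l) • y by module] at h
    constructor <;> linarith [h.1, h.2]
  mapsTo x hx := ⟨by linarith [(hU.mapsTo hx).2], by linarith [(hU.mapsTo hx).1]⟩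
  high_mem := hU.low_mem
  low_mem := hU.high_mem
  apply_mix t ht := by
    rw [show t • xl + (1 - t) • xs = (1 - t) • xs + (1 - (1 - t)) • xl by module,
      hU.apply_mix (1 - t) (Icc.one_sub_mem ht)]
    ring

theorem strictMonoOn_mix (hU : IsCalibratedUtility X U xs xl) (hx : x ∈ X) (hy : y ∈ X)
    (hxy : U y < U x) : StrictMonoOn (fun l : ℝ => U (l • x + (1 - l) • y)) (Icc 0 1) :=
  fun _ hl' _ hl hll' => hU.betweenness.mix_of_lt hU.convex hx hy hxy hl'.1 hll' hl.2

theorem not_apply_mix_lt (hU : IsCalibratedUtility X U xs xl) (hx : x ∈ X) (hy : y ∈ X)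
    (hxy : U x = U y) (hl : l ∈ Icc (0 : ℝ) 1) : ¬ U (l • x + (1 - l) • y) < U x := by
  intro hm
  rcases hl.1.eq_or_lt with rfl | hl0
  · simp [hxy] at hm
  rcases hl.2.lt_or_eq with hl1 | rfl
  swap
  · simp at hm
  -- for the midpoint `q` of `y` and `m`, betweenness gives `U m < U q`; but `m` is a proper
  -- mixture of `x` and `q`, so betweenness also gives `U q < U m`
  set m := l • x + (1 - l) • y with hm
  have hmX : m ∈ X := hU.convex.mix_mem hx hy hl
  obtain ⟨hqy, hmq⟩ := hU.betweenness y hy m hmX (1 / 2) ⟨by norm_num, by norm_num⟩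
    (show U m < U y by rwa [← hxy])
  set q := (1 / 2 : ℝ) • y + (1 - 1 / 2 : ℝ) • m with hq
  have hqX : q ∈ X := hU.convex.mix_mem hy hmX (l := 1 / 2) ⟨by norm_num, by norm_num⟩
  have hqm := (hU.betweenness x hx q hqX (l / (2 - l))
    ⟨div_pos hl0 (by linarith), (div_lt_one (by linarith)).2 (by linarith)⟩ (by linarith)).2
  have hmix : (l / (2 - l)) • x + (1 - l / (2 - l)) • q = m := by
    have : (2 : ℝ) - l ≠ 0 := by linarith
    rw [hq, hm]
    match_scalars <;> field_simp <;> ring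
  rw [hmix] at hqm
  exact hqm.not_gt hmq

theorem apply_mix_of_eq (hU : IsCalibratedUtility X U xs xl) (hx : x ∈ X) (hy : y ∈ X)
    (hxy : U x = U y) (hl : l ∈ Icc (0 : ℝ) 1) : U (l • x + (1 - l) • y) = U x := by
  have h := hU.dual.not_apply_mix_lt hx hy (by simp [hxy]) hl
  exact le_antisymm (by linarith [not_lt.1 h]) (not_lt.1 (hU.not_apply_mix_lt hx hy hxy hl))

theorem monotoneOn_mix (hU : IsCalibratedUtility X U xs xl) (hx : x ∈ X) (hy : y ∈ X)
    (hxy : U y ≤ U x) : MonotoneOn (fun l : ℝ => U (l • x + (1 - l) • y)) (Icc 0 1) := by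
  rcases hxy.lt_or_eq with hxy | hxy
  · exact (hU.strictMonoOn_mix hx hy hxy).monotoneOn
  · intro a ha b hb _
    simp only [hU.apply_mix_of_eq hx hy hxy.symm ha, hU.apply_mix_of_eq hx hy hxy.symm hb, le_refl]

theorem injOn_mix (hU : IsCalibratedUtility X U xs xl) (hx : x ∈ X) (hy : y ∈ X)
    (hxy : U y ≠ U x) : InjOn (fun l : ℝ => U (l • x + (1 - l) • y)) (Icc 0 1) := by
  rcases hxy.lt_or_gt with hxy | hxy
  · exact (hU.strictMonoOn_mix hx hy hxy).injOn
  · intro a ha b hb hab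
    exact (hU.dual.strictMonoOn_mix hx hy (by simpa using hxy)).injOn ha hb (by simp_all)

theorem eq_of_apply_mix_eq (hU : IsCalibratedUtility X U xs xl) (hx : x ∈ X) (hy : y ∈ X)
    (hl : l ∈ Ioo (0 : ℝ) 1) (h : U (l • x + (1 - l) • y) = U y) : U x = U y := by
  by_contra hxy
  have := hU.injOn_mix hx hy (Ne.symm hxy) (Ioo_subset_Icc_self hl) (left_mem_Icc.2 zero_le_one)
    (by simpa using h)
  exact hl.1.ne' this

theorem apply_eq_of_add_smul_eq (hU : IsCalibratedUtility X U xs xl) {p q w z : E} (hp : p ∈ X)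
    (hq : q ∈ X) (hw : w ∈ X) (hz : z ∈ X) (hpq : U p = U q) (hzp : U z = U p) {A B : ℝ}
    (hA : 0 < A) (hB : 0 < B) (hAB : 1 < A + B) (h : A • p + B • q = w + (A + B - 1) • z) :
    U w = U p := by
  have hK : A + B ≠ 0 := by positivity
  have hpq' := hU.apply_mix_of_eq hp hq hpq (l := A / (A + B))
    ⟨by positivity, div_le_one_of_le₀ (by linarith) (by positivity)⟩
  have hmix : (A / (A + B)) • p + (1 - A / (A + B)) • q =
      (1 / (A + B)) • w + (1 - 1 / (A + B)) • z := by
    rw [show (A / (A + B)) • p + (1 - A / (A + B)) • q = (1 / (A + B)) • (A • p + B • q) by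
      match_scalars <;> field_simp; ring, h]
    match_scalars <;> field_simp
  rw [hmix, ← hzp] at hpq'
  exact (hU.eq_of_apply_mix_eq hw hz ⟨by positivity, (div_lt_one (by linarith)).2 hAB⟩
    hpq').trans hzp

theorem apply_mix_low_le (hU : IsCalibratedUtility X U xs xl) (hx : x ∈ X)
    (hl : l ∈ Icc (0 : ℝ) 1) : U (l • x + (1 - l) • xl) ≤ U x := by
  simpa using hU.monotoneOn_mix hx hU.low_mem (hU.apply_low ▸ (hU.mapsTo hx).1) hl
    (right_mem_Icc.2 zero_le_one) hl.2

theorem exists_apply_mix_eq [ContinuousAdd E] [ContinuousSMul ℝ E]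
    (hU : IsCalibratedUtility X U xs xl) (hx : x ∈ X) (hy : y ∈ X) (ht : t ∈ Icc (U y) (U x)) :
    ∃ l ∈ Icc (0 : ℝ) 1, U (l • x + (1 - l) • y) = t := by
  have hcont : ContinuousOn (fun l : ℝ => U (l • x + (1 - l) • y)) (Icc 0 1) :=
    hU.continuousOn.comp (by fun_prop) fun l hl => hU.convex.mix_mem hx hy hl
  exact intermediate_value_Icc zero_le_one hcont (by simpa using ht)

end IsCalibratedUtility

end CalibratedUtility

section WeakOrder

variable {α : Type*} [TopologicalSpace α]

/-- `r x y` stands for `x ≿ y`. -/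
structure IsContinuousWeakOrder (X : Set α) (r : α → α → Prop) : Prop where
  total : ∀ x ∈ X, ∀ y ∈ X, r x y ∨ r y x
  trans : ∀ x ∈ X, ∀ y ∈ X, ∀ z ∈ X, r x y → r y z → r x z
  isClosed_upper : ∀ y ∈ X, IsClosed {x ∈ X | r x y}
  isClosed_lower : ∀ y ∈ X, IsClosed {x ∈ X | r y x}

namespace IsContinuousWeakOrder

variable {X : Set α} {r : α → α → Prop}

theorem refl (hr : IsContinuousWeakOrder X r) {x : α} (hx : x ∈ X) : r x x :=
  (hr.total x hx x hx).elim id id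

theorem swap (hr : IsContinuousWeakOrder X r) : IsContinuousWeakOrder X fun x y => r y x where
  total x hx y hy := hr.total y hy x hx
  trans x hx y hy z hz hxy hyz := hr.trans z hz y hy x hx hyz hxy
  isClosed_upper := hr.isClosed_lower
  isClosed_lower := hr.isClosed_upper

theorem exists_greatest (hr : IsContinuousWeakOrder X r) (hXc : IsCompact X) (hne : X.Nonempty) :
    ∃ m ∈ X, ∀ y ∈ X, r m y := by
  have : Nonempty X := hne.to_subtype
  let upper : X → Set α := fun y => {x ∈ X | r x y}
  have hdir : Directed (· ⊇ ·) upper := by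
    intro a b
    rcases hr.total a a.2 b b.2 with hab | hba
    · exact ⟨a, subset_rfl, fun x hx => ⟨hx.1, hr.trans x hx.1 a a.2 b b.2 hx.2 hab⟩⟩
    · exact ⟨b, fun x hx => ⟨hx.1, hr.trans x hx.1 b b.2 a a.2 hx.2 hba⟩, subset_rfl⟩
  obtain ⟨m, hm⟩ := IsCompact.nonempty_iInter_of_directed_nonempty_isCompact_isClosed upper hdir
    (fun y => ⟨y, y.2, hr.refl y.2⟩)
    (fun y => hXc.of_isClosed_subset (hr.isClosed_upper y y.2) fun _ hx => hx.1)
    (fun y => hr.isClosed_upper y y.2)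
  rw [mem_iInter] at hm
  exact ⟨m, (hm (Classical.arbitrary X)).1, fun y hy => (hm ⟨y, hy⟩).2⟩

end IsContinuousWeakOrder

end WeakOrder

section SegmentUtility

variable {E : Type*} [AddCommGroup E] [Module ℝ E]

noncomputable def segmentUtility (r : E → E → Prop) (xs xl x : E) : ℝ :=
  Classical.epsilon fun t =>
    t ∈ Icc (0 : ℝ) 1 ∧ r (t • xs + (1 - t) • xl) x ∧ r x (t • xs + (1 - t) • xl)

variable [TopologicalSpace E] {X : Set E} {r : E → E → Prop} {xs xl : E}

namespace IsContinuousWeakOrder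

theorem rel_mix_iff (hr : IsContinuousWeakOrder X r) (hX : Convex ℝ X)
    (hbet : Betweenness X fun x y => r x y ∧ ¬ r y x) (hxs : xs ∈ X) (hxl : xl ∈ X)
    (hsl : r xs xl ∧ ¬ r xl xs) {a b : ℝ} (ha : a ∈ Icc (0 : ℝ) 1) (hb : b ∈ Icc (0 : ℝ) 1) :
    r (a • xs + (1 - a) • xl) (b • xs + (1 - b) • xl) ↔ b ≤ a := by
  refine ⟨fun h => not_lt.1 fun hab => (hbet.mix_of_lt hX hxs hxl hsl ha.1 hab hb.2).2 h,
    fun hba => ?_⟩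
  rcases hba.lt_or_eq with hba | rfl
  · exact (hbet.mix_of_lt hX hxs hxl hsl hb.1 hba ha.2).1
  · exact hr.refl (hX.mix_mem hxs hxl ha)

variable [ContinuousAdd E] [ContinuousSMul ℝ E]

theorem exists_mix_indifferent (hr : IsContinuousWeakOrder X r) (hX : Convex ℝ X)
    (hxs : xs ∈ X) (hxl : xl ∈ X) {x : E} (hx : x ∈ X) (hxsx : r xs x) (hxxl : r x xl) :
    ∃ t ∈ Icc (0 : ℝ) 1, r (t • xs + (1 - t) • xl) x ∧ r x (t • xs + (1 - t) • xl) := by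
  let z : ℝ → E := fun t => t • xs + (1 - t) • xl
  have hz : Continuous z := by fun_prop
  have hzX : MapsTo z (Icc 0 1) X := fun t ht => hX.mix_mem hxs hxl ht
  obtain ⟨t, ht, hup, hlow⟩ := isPreconnected_closed_iff.1 isPreconnected_Icc
    (z ⁻¹' {w ∈ X | r w x}) (z ⁻¹' {w ∈ X | r x w})
    ((hr.isClosed_upper x hx).preimage hz) ((hr.isClosed_lower x hx).preimage hz)
    (fun t ht => (hr.total _ (hzX ht) x hx).imp (⟨hzX ht, ·⟩) (⟨hzX ht, ·⟩))
    ⟨1, right_mem_Icc.2 zero_le_one, by simpa [z] using ⟨hxs, hxsx⟩⟩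
    ⟨0, left_mem_Icc.2 zero_le_one, by simpa [z] using ⟨hxl, hxxl⟩⟩
  exact ⟨t, ht, hup.2, hlow.2⟩

theorem segmentUtility_spec (hr : IsContinuousWeakOrder X r) (hX : Convex ℝ X)
    (hxs : xs ∈ X) (hxl : xl ∈ X) (hmax : ∀ y ∈ X, r xs y) (hmin : ∀ y ∈ X, r y xl) {x : E}
    (hx : x ∈ X) :
    segmentUtility r xs xl x ∈ Icc (0 : ℝ) 1 ∧
      r (segmentUtility r xs xl x • xs + (1 - segmentUtility r xs xl x) • xl) x ∧
      r x (segmentUtility r xs xl x • xs + (1 - segmentUtility r xs xl x) • xl) :=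
  Classical.epsilon_spec (hr.exists_mix_indifferent hX hxs hxl hx (hmax x hx) (hmin x hx))

theorem exists_isCalibratedUtility (hr : IsContinuousWeakOrder X r)
    (hX : Convex ℝ X) (hXc : IsCompact X) (hbet : Betweenness X fun x y => r x y ∧ ¬ r y x)
    (hnond : ∃ x ∈ X, ∃ y ∈ X, r x y ∧ ¬ r y x) :
    ∃ U xs xl, IsCalibratedUtility X U xs xl ∧ ∀ x ∈ X, ∀ y ∈ X, r x y ↔ U y ≤ U x := by
  obtain ⟨x₀, hx₀, y₀, hy₀, hxy₀⟩ := hnond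
  obtain ⟨xs, hxs, hmax⟩ := hr.exists_greatest hXc ⟨x₀, hx₀⟩
  obtain ⟨xl, hxl, hmin⟩ := hr.swap.exists_greatest hXc ⟨x₀, hx₀⟩
  have hsl : r xs xl ∧ ¬ r xl xs := ⟨hmax xl hxl, fun h => hxy₀.2 <| hr.trans y₀ hy₀ xs hxs x₀ hx₀
    (hr.trans y₀ hy₀ xl hxl xs hxs (hmin y₀ hy₀) h) (hmax x₀ hx₀)⟩
  set U := segmentUtility r xs xl
  have hspec := fun x (hx : x ∈ X) => hr.segmentUtility_spec hX hxs hxl hmax hmin hx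
  have hmix : ∀ t ∈ Icc (0 : ℝ) 1, U (t • xs + (1 - t) • xl) = t := fun t ht => by
    obtain ⟨hUt, h₁, h₂⟩ := hspec _ (hX.mix_mem hxs hxl ht)
    exact le_antisymm ((hr.rel_mix_iff hX hbet hxs hxl hsl ht hUt).1 h₂)
      ((hr.rel_mix_iff hX hbet hxs hxl hsl hUt ht).1 h₁)
  have hrep : ∀ x ∈ X, ∀ y ∈ X, r x y ↔ U y ≤ U x := by
    intro x hx y hy
    obtain ⟨hUx, hx₁, hx₂⟩ := hspec x hx
    obtain ⟨hUy, hy₁, hy₂⟩ := hspec y hy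
    have hzx := hX.mix_mem hxs hxl hUx
    have hzy := hX.mix_mem hxs hxl hUy
    rw [← hr.rel_mix_iff hX hbet hxs hxl hsl hUx hUy]
    exact ⟨fun h => hr.trans _ hzx y hy _ hzy (hr.trans _ hzx x hx y hy hx₁ h) hy₂,
      fun h => hr.trans x hx _ hzx y hy hx₂ (hr.trans _ hzx _ hzy y hy h hy₁)⟩
  have hlt : ∀ x ∈ X, ∀ y ∈ X, (r x y ∧ ¬ r y x) ↔ U y < U x := fun x hx y hy => by
    rw [hrep x hx y hy, hrep y hy x hx, not_le]
    exact ⟨fun h => h.2, fun h => ⟨h.le, h⟩⟩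
  refine ⟨U, xs, xl, ⟨hX, continuousOn_of_isClosed_contour (fun x hx => (hspec x hx).1)
    (fun t ht => ⟨_, hX.mix_mem hxs hxl ht, hmix t ht⟩) (fun y hy => ?_) (fun y hy => ?_),
    fun x hx y hy l hl hxy => ?_, fun x hx => (hspec x hx).1, hxs, hxl, hmix⟩, hrep⟩
  · rw [show {x ∈ X | U x ≤ U y} = {x ∈ X | r y x} from
      Set.ext fun x => and_congr_right fun hx => (hrep y hy x hx).symm]
    exact hr.isClosed_lower y hy
  · rw [show {x ∈ X | U y ≤ U x} = {x ∈ X | r x y} from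
      Set.ext fun x => and_congr_right fun hx => (hrep x hx y hy).symm]
    exact hr.isClosed_upper y hy
  · have hm := hX.mix_mem hx hy (Ioo_subset_Icc_self hl)
    obtain ⟨hxm, hmy⟩ := hbet x hx y hy l hl ((hlt x hx y hy).2 hxy)
    exact ⟨(hlt x hx _ hm).1 hxm, (hlt _ hm y hy).1 hmy⟩

end IsContinuousWeakOrder

end SegmentUtility

section LocalUtility

variable {E : Type*} [AddCommGroup E] [Module ℝ E]

noncomputable def lowerWeight (U : E → ℝ) (xl x : E) (t : ℝ) : ℝ :=
  Classical.epsilon fun l => l ∈ Icc (0 : ℝ) 1 ∧ U (l • x + (1 - l) • xl) = t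

/-- For `U x < t` the value is `1 - u'`, where `u'` is the lower branch for the reversed utility
`1 - U` at level `1 - t`, with `xs` in place of `xl`. -/
noncomputable def localUtility (U : E → ℝ) (xs xl x : E) (t : ℝ) : ℝ :=
  if t ∈ Ioo (0 : ℝ) 1 then
    if t ≤ U x then t / lowerWeight U xl x t
    else 1 - (1 - t) / lowerWeight (fun y => 1 - U y) xs x (1 - t)
  else U x

variable {U : E → ℝ} {xs xl x y : E} {t l c : ℝ}

theorem localUtility_of_le (ht : t ∈ Ioo (0 : ℝ) 1) (htx : t ≤ U x) :
    localUtility U xs xl x t = t / lowerWeight U xl x t := by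
  simp [localUtility, ht, htx]

variable [TopologicalSpace E]

namespace IsCalibratedUtility

variable {X : Set E}

theorem lowerWeight_eq (hU : IsCalibratedUtility X U xs xl) (hx : x ∈ X) (ht : 0 < t)
    (hl : l ∈ Icc (0 : ℝ) 1) (h : U (l • x + (1 - l) • xl) = t) : lowerWeight U xl x t = l := by
  obtain ⟨hw, hwt⟩ := Classical.epsilon_spec
    (p := fun l => l ∈ Icc (0 : ℝ) 1 ∧ U (l • x + (1 - l) • xl) = t) ⟨l, hl, h⟩
  have htx : t ≤ U x := h ▸ hU.apply_mix_low_le hx hl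
  exact hU.injOn_mix hx hU.low_mem (by rw [hU.apply_low]; linarith) hw hl (hwt.trans h.symm)

theorem localUtility_eq_of_apply_mix_eq (hU : IsCalibratedUtility X U xs xl) (hx : x ∈ X)
    (ht : t ∈ Ioo (0 : ℝ) 1) (htc : t ≤ c) (h : U ((t / c) • x + (1 - t / c) • xl) = t) :
    localUtility U xs xl x t = c := by
  have hc : 0 < c := ht.1.trans_le htc
  have hw : t / c ∈ Icc (0 : ℝ) 1 := ⟨div_nonneg ht.1.le hc.le, div_le_one_of_le₀ htc hc.le⟩
  rw [localUtility_of_le ht (h ▸ hU.apply_mix_low_le hx hw), hU.lowerWeight_eq hx ht.1 hw h,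
    div_div_cancel₀ ht.1.ne']

theorem localUtility_self (hU : IsCalibratedUtility X U xs xl) (hx : x ∈ X) :
    localUtility U xs xl x (U x) = U x := by
  by_cases h : U x ∈ Ioo (0 : ℝ) 1
  · exact hU.localUtility_eq_of_apply_mix_eq hx h le_rfl (by simp [div_self h.1.ne'])
  · simp [localUtility, h]

theorem localUtility_dual (hU : IsCalibratedUtility X U xs xl) (hx : x ∈ X) :
    localUtility (fun y => 1 - U y) xl xs x (1 - t) = 1 - localUtility U xs xl x t := by
  by_cases ht : t ∈ Ioo (0 : ℝ) 1
  · have ht' := Ioo.one_sub_mem ht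
    rcases lt_trichotomy (U x) t with hlt | rfl | hgt
    · rw [localUtility, localUtility, if_pos ht', if_pos (by linarith), if_pos ht,
        if_neg (not_le.2 hlt)]
      ring
    · simpa [hU.localUtility_self hx] using hU.dual.localUtility_self hx
    · rw [localUtility, localUtility, if_pos ht', if_neg (by linarith), if_pos ht, if_pos hgt.le]
      simp only [sub_sub_cancel]
  · have ht' : 1 - t ∉ Ioo (0 : ℝ) 1 := fun h => ht (by simpa using Ioo.one_sub_mem h)
    simp [localUtility, ht, ht']

theorem localUtility_high (hU : IsCalibratedUtility X U xs xl) (ht : t ∈ Icc (0 : ℝ) 1) :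
    localUtility U xs xl xs t = 1 := by
  by_cases ht' : t ∈ Ioo (0 : ℝ) 1
  · exact hU.localUtility_eq_of_apply_mix_eq hU.high_mem ht' ht.2 (by simpa using hU.apply_mix t ht)
  · simp [localUtility, ht', hU.apply_high]

theorem localUtility_low (hU : IsCalibratedUtility X U xs xl) (ht : t ∈ Icc (0 : ℝ) 1) :
    localUtility U xs xl xl t = 0 := by
  have h := hU.dual.localUtility_high (Icc.one_sub_mem ht)
  rw [hU.localUtility_dual hU.low_mem] at h
  linarith

variable [ContinuousAdd E] [ContinuousSMul ℝ E]

theorem lowerWeight_spec (hU : IsCalibratedUtility X U xs xl) (hx : x ∈ X) (ht : t ∈ Icc 0 (U x)) :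
    lowerWeight U xl x t ∈ Icc (0 : ℝ) 1 ∧
      U (lowerWeight U xl x t • x + (1 - lowerWeight U xl x t) • xl) = t :=
  Classical.epsilon_spec (hU.exists_apply_mix_eq hx hU.low_mem (by rwa [hU.apply_low]))

theorem lowerWeight_pos (hU : IsCalibratedUtility X U xs xl) (hx : x ∈ X) (ht : t ∈ Ioc 0 (U x)) :
    0 < lowerWeight U xl x t := by
  obtain ⟨hw, hwt⟩ := hU.lowerWeight_spec hx (Ioc_subset_Icc_self ht)
  refine hw.1.lt_of_ne fun h0 => ht.1.ne ?_
  rw [← hwt, ← h0]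
  simp [hU.apply_low]

theorem le_localUtility (hU : IsCalibratedUtility X U xs xl) (hx : x ∈ X)
    (ht : t ∈ Ioo (0 : ℝ) 1) (htx : t ≤ U x) : t ≤ localUtility U xs xl x t := by
  rw [localUtility_of_le ht htx]
  exact le_div_self ht.1.le (hU.lowerWeight_pos hx ⟨ht.1, htx⟩)
    (hU.lowerWeight_spec hx ⟨ht.1.le, htx⟩).1.2

theorem apply_mix_localUtility (hU : IsCalibratedUtility X U xs xl) (hx : x ∈ X)
    (ht : t ∈ Ioo (0 : ℝ) 1) (htx : t ≤ U x) :
    U ((t / localUtility U xs xl x t) • x + (1 - t / localUtility U xs xl x t) • xl) = t := by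
  rw [localUtility_of_le ht htx, div_div_cancel₀ ht.1.ne']
  exact (hU.lowerWeight_spec hx ⟨ht.1.le, htx⟩).2

theorem lt_localUtility (hU : IsCalibratedUtility X U xs xl) (hx : x ∈ X)
    (ht : t ∈ Ioo (0 : ℝ) 1) (htx : t < U x) : t < localUtility U xs xl x t := by
  refine (hU.le_localUtility hx ht htx.le).lt_of_ne fun h => htx.ne' ?_
  simpa [← h, div_self ht.1.ne'] using hU.apply_mix_localUtility hx ht htx.le

theorem localUtility_lt (hU : IsCalibratedUtility X U xs xl) (hx : x ∈ X)
    (ht : t ∈ Ioo (0 : ℝ) 1) (hxt : U x < t) : localUtility U xs xl x t < t := by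
  have h := hU.dual.lt_localUtility hx (Ioo.one_sub_mem ht) (show 1 - t < 1 - U x by linarith)
  rw [hU.localUtility_dual hx] at h
  linarith

theorem apply_mix_localUtility_of_ge (hU : IsCalibratedUtility X U xs xl) (hx : x ∈ X)
    (ht : t ∈ Ioo (0 : ℝ) 1) (hxt : U x ≤ t) :
    U (((1 - t) / (1 - localUtility U xs xl x t)) • x +
      (1 - (1 - t) / (1 - localUtility U xs xl x t)) • xs) = t := by
  have h := hU.dual.apply_mix_localUtility hx (Ioo.one_sub_mem ht)
    (show 1 - t ≤ 1 - U x by linarith)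
  rw [hU.localUtility_dual hx] at h
  linarith

theorem eq_of_localUtility_eq (hU : IsCalibratedUtility X U xs xl) (hx : x ∈ X)
    (h : localUtility U xs xl x t = t) : U x = t := by
  by_cases ht : t ∈ Ioo (0 : ℝ) 1
  · rcases lt_trichotomy (U x) t with hlt | heq | hgt
    · exact absurd h (hU.localUtility_lt hx ht hlt).ne
    · exact heq
    · exact absurd h (hU.lt_localUtility hx ht hgt).ne'
  · simpa [localUtility, ht] using h

theorem localUtility_mix_of_le (hU : IsCalibratedUtility X U xs xl) (hx : x ∈ X) (hy : y ∈ X)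
    (ht : t ∈ Ioo (0 : ℝ) 1) (hxt : t ≤ U x) (hyt : t ≤ U y) (hl : l ∈ Icc (0 : ℝ) 1) :
    localUtility U xs xl (l • x + (1 - l) • y) t =
      l * localUtility U xs xl x t + (1 - l) * localUtility U xs xl y t := by
  have ha := hU.le_localUtility hx ht hxt
  have hb := hU.le_localUtility hy ht hyt
  have hpx := hU.apply_mix_localUtility hx ht hxt
  have hpy := hU.apply_mix_localUtility hy ht hyt
  generalize localUtility U xs xl x t = a at ha hpx ⊢
  generalize localUtility U xs xl y t = b at hb hpy ⊢
  have ha0 : 0 < a := ht.1.trans_le ha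
  have hb0 : 0 < b := ht.1.trans_le hb
  have hc : t ≤ l * a + (1 - l) * b := by nlinarith [hl.1, hl.2]
  have hc0 : 0 < l * a + (1 - l) * b := ht.1.trans_le hc
  have hpxX := hU.convex.mix_mem hx hU.low_mem (l := t / a)
    ⟨div_nonneg ht.1.le ha0.le, div_le_one_of_le₀ ha ha0.le⟩
  have hpyX := hU.convex.mix_mem hy hU.low_mem (l := t / b)
    ⟨div_nonneg ht.1.le hb0.le, div_le_one_of_le₀ hb hb0.le⟩
  -- the mixture of the two points indifferent to level `t` that puts weights `l : 1 - l` on `x, y`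
  have h := hU.apply_mix_of_eq hpxX hpyX (hpx.trans hpy.symm) (l := l * a / (l * a + (1 - l) * b))
    ⟨div_nonneg (mul_nonneg hl.1 ha0.le) hc0.le,
      div_le_one_of_le₀ (le_add_of_nonneg_right (mul_nonneg (sub_nonneg.2 hl.2) hb0.le)) hc0.le⟩
  refine hU.localUtility_eq_of_apply_mix_eq (hU.convex.mix_mem hx hy hl) ht hc ?_
  convert h.trans hpx using 2
  match_scalars <;> field_simp <;> ring

theorem localUtility_mix_of_ge (hU : IsCalibratedUtility X U xs xl) (hx : x ∈ X) (hy : y ∈ X)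
    (ht : t ∈ Ioo (0 : ℝ) 1) (hxt : U x ≤ t) (hyt : U y ≤ t) (hl : l ∈ Icc (0 : ℝ) 1) :
    localUtility U xs xl (l • x + (1 - l) • y) t =
      l * localUtility U xs xl x t + (1 - l) * localUtility U xs xl y t := by
  have h := hU.dual.localUtility_mix_of_le hx hy (Ioo.one_sub_mem ht)
    (show 1 - t ≤ 1 - U x by linarith) (show 1 - t ≤ 1 - U y by linarith) hl
  rw [hU.localUtility_dual hx, hU.localUtility_dual hy,
    hU.localUtility_dual (hU.convex.mix_mem hx hy hl)] at h
  linarith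

theorem apply_mix_eq_of_lt_of_lt (hU : IsCalibratedUtility X U xs xl) (hx : x ∈ X) (hy : y ∈ X)
    (ht : t ∈ Ioo (0 : ℝ) 1) (hxt : t < U x) (hyt : U y < t) {s : ℝ}
    (hs : s * localUtility U xs xl x t + (1 - s) * localUtility U xs xl y t = t) :
    U (s • x + (1 - s) • y) = t := by
  have ha := hU.lt_localUtility hx ht hxt
  have hb := hU.localUtility_lt hy ht hyt
  have hp := hU.apply_mix_localUtility hx ht hxt.le
  have hq := hU.apply_mix_localUtility_of_ge hy ht hyt.le
  generalize localUtility U xs xl x t = a at ha hp hs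
  generalize localUtility U xs xl y t = b at hb hq hs
  have hs0 : 0 < s := pos_of_mul_pos_left (by linarith : 0 < s * (a - b)) (by linarith)
  have hs1 : 0 < 1 - s := pos_of_mul_pos_left (by linarith : 0 < (1 - s) * (a - b)) (by linarith)
  have ht1 : 0 < 1 - t := sub_pos.2 ht.2
  have ha0 : 0 < a := ht.1.trans ha
  have hb1 : 0 < 1 - b := by linarith
  have hpX := hU.convex.mix_mem hx hU.low_mem (l := t / a)
    ⟨div_nonneg ht.1.le ha0.le, div_le_one_of_le₀ ha.le ha0.le⟩
  have hqX := hU.convex.mix_mem hy hU.high_mem (l := (1 - t) / (1 - b))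
    ⟨div_nonneg ht1.le hb1.le, div_le_one_of_le₀ (by linarith) hb1.le⟩
  have hzt := hU.apply_mix t (Ioo_subset_Icc_self ht)
  -- with `p`, `q` the points in `hp`, `hq`, these weights make
  -- `A • p + B • q - (s • x + (1 - s) • y)` a multiple of the level-`t` calibration point
  have hA : s < s * a / t := (lt_div_iff₀ ht.1).2 (by nlinarith)
  have hB : 1 - s < (1 - s) * (1 - b) / (1 - t) := (lt_div_iff₀ ht1).2 (by nlinarith)
  rw [← hp]
  refine hU.apply_eq_of_add_smul_eq hpX hqX (hU.convex.mix_mem hx hy ⟨hs0.le, by linarith⟩)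
    (hU.convex.mix_mem hU.high_mem hU.low_mem (Ioo_subset_Icc_self ht)) (hp.trans hq.symm)
    (hzt.trans hp.symm) (hs0.trans hA) (hs1.trans hB) (by linarith) ?_
  have := ht.1.ne'
  have := ht1.ne'
  have := ha0.ne'
  have := hb1.ne'
  subst hs
  match_scalars <;> field_simp <;> ring

theorem localUtility_mix_of_lt_of_lt (hU : IsCalibratedUtility X U xs xl) (hx : x ∈ X)
    (hy : y ∈ X) (ht : t ∈ Ioo (0 : ℝ) 1) (hxt : t < U x) (hyt : U y < t)
    (hl : l ∈ Icc (0 : ℝ) 1) :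
    localUtility U xs xl (l • x + (1 - l) • y) t =
      l * localUtility U xs xl x t + (1 - l) * localUtility U xs xl y t := by
  have ha := hU.lt_localUtility hx ht hxt
  have hb := hU.localUtility_lt hy ht hyt
  obtain ⟨s, hs⟩ : ∃ s, s = (t - localUtility U xs xl y t) /
      (localUtility U xs xl x t - localUtility U xs xl y t) := ⟨_, rfl⟩
  have hst : s * localUtility U xs xl x t + (1 - s) * localUtility U xs xl y t = t := by
    rw [hs]; field_simp [(sub_pos.2 (hb.trans ha)).ne']; ring
  -- split the segment at the mixture `w` indifferent to level `t`, where `u (w, t) = t`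
  have hw := hU.apply_mix_eq_of_lt_of_lt hx hy ht hxt hyt hst
  have hs0 : 0 < s := by rw [hs]; exact div_pos (by linarith) (by linarith)
  have hs1 : s < 1 := by rw [hs, div_lt_one (by linarith)]; linarith
  have hwX := hU.convex.mix_mem hx hy (l := s) ⟨hs0.le, hs1.le⟩
  have huw : localUtility U xs xl (s • x + (1 - s) • y) t = t := hw ▸ hU.localUtility_self hwX
  rcases le_or_gt s l with hsl | hls
  · have h := hU.localUtility_mix_of_le hx hwX ht hxt.le hw.ge (l := (l - s) / (1 - s))
      ⟨div_nonneg (by linarith) (by linarith), (div_le_one (by linarith)).2 (by linarith [hl.2])⟩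
    rw [show ((l - s) / (1 - s)) • x + (1 - (l - s) / (1 - s)) • (s • x + (1 - s) • y) =
      l • x + (1 - l) • y by have := (sub_pos.2 hs1).ne'; match_scalars <;> field_simp <;> ring,
      huw] at h
    rw [h]
    field_simp [(sub_pos.2 hs1).ne']
    linear_combination (l - 1) * hst
  · have h := hU.localUtility_mix_of_ge hwX hy ht hw.le hyt.le (l := l / s)
      ⟨div_nonneg hl.1 hs0.le, (div_le_one hs0).2 hls.le⟩
    rw [show (l / s) • (s • x + (1 - s) • y) + (1 - l / s) • y = l • x + (1 - l) • y by
      have := hs0.ne'; match_scalars <;> field_simp; ring, huw] at h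
    rw [h]
    field_simp
    linear_combination (-l) * hst

theorem localUtility_mix (hU : IsCalibratedUtility X U xs xl) (hx : x ∈ X) (hy : y ∈ X)
    (ht : t ∈ Ioo (0 : ℝ) 1) (hl : l ∈ Icc (0 : ℝ) 1) :
    localUtility U xs xl (l • x + (1 - l) • y) t =
      l * localUtility U xs xl x t + (1 - l) * localUtility U xs xl y t := by
  rcases le_or_gt t (U x) with hxt | hxt <;> rcases le_or_gt t (U y) with hyt | hyt
  · exact hU.localUtility_mix_of_le hx hy ht hxt hyt hl
  · rcases hxt.lt_or_eq with hxt | hxt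
    · exact hU.localUtility_mix_of_lt_of_lt hx hy ht hxt hyt hl
    · exact hU.localUtility_mix_of_ge hx hy ht hxt.ge hyt.le hl
  · rcases hyt.lt_or_eq with hyt | hyt
    · rw [show l • x + (1 - l) • y = (1 - l) • y + (1 - (1 - l)) • x by module,
        hU.localUtility_mix_of_lt_of_lt hy hx ht hyt hxt (Icc.one_sub_mem hl)]
      ring
    · exact hU.localUtility_mix_of_ge hx hy ht hxt.le hyt.ge hl
  · exact hU.localUtility_mix_of_ge hx hy ht hxt.le hyt.le hl

theorem continuousOn_lowerWeight (hU : IsCalibratedUtility X U xs xl) :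
    ContinuousOn (fun p : E × ℝ => lowerWeight U xl p.1 p.2) {p | p.1 ∈ X ∧ p.2 ∈ Ioc 0 (U p.1)} :=
  continuousOn_of_unique_solution isCompact_Icc
    (G := fun q : (E × ℝ) × ℝ => U (q.2 • q.1.1 + (1 - q.2) • xl))
    (hU.continuousOn.comp (Continuous.continuousOn (by fun_prop))
      fun q hq => hU.convex.mix_mem hq.1.1 hU.low_mem hq.2)
    continuous_snd.continuousOn
    (fun p hp => (hU.lowerWeight_spec hp.1 (Ioc_subset_Icc_self hp.2)).1)
    (fun p hp => (hU.lowerWeight_spec hp.1 (Ioc_subset_Icc_self hp.2)).2)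
    (fun p hp _ hc h => (hU.lowerWeight_eq hp.1 hp.2.1 hc h).symm)

theorem continuousOn_localUtility_of_le (hU : IsCalibratedUtility X U xs xl) :
    ContinuousOn (fun p : E × ℝ => localUtility U xs xl p.1 p.2)
      {p | p.1 ∈ X ∧ p.2 ∈ Ioo 0 1 ∧ p.2 ≤ U p.1} :=
  (continuous_snd.continuousOn.div
    (hU.continuousOn_lowerWeight.mono fun _ hp => ⟨hp.1, hp.2.1.1, hp.2.2⟩)
    fun _ hp => (hU.lowerWeight_pos hp.1 ⟨hp.2.1.1, hp.2.2⟩).ne').congr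
    fun _ hp => localUtility_of_le hp.2.1 hp.2.2

theorem continuousOn_localUtility (hU : IsCalibratedUtility X U xs xl) :
    ContinuousOn (fun p : E × ℝ => localUtility U xs xl p.1 p.2) (X ×ˢ Ioo 0 1) := by
  refine continuousOn_of_nonpos_of_nonneg (g := fun p => p.2 - U p.1)
    (continuous_snd.continuousOn.sub (hU.continuousOn.comp continuous_fst.continuousOn
      fun _ hp => hp.1)) ?_ ?_
  · exact hU.continuousOn_localUtility_of_le.mono fun p hp => ⟨hp.1.1, hp.1.2, sub_nonpos.1 hp.2⟩
  · have hdual : ContinuousOn (fun p : E × ℝ => localUtility (fun x => 1 - U x) xl xs p.1 (1 - p.2))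
        {p | p ∈ X ×ˢ Ioo 0 1 ∧ 0 ≤ p.2 - U p.1} :=
      hU.dual.continuousOn_localUtility_of_le.comp (f := fun p : E × ℝ => (p.1, 1 - p.2))
        (Continuous.continuousOn (by fun_prop)) fun p hp =>
          ⟨hp.1.1, Ioo.one_sub_mem hp.1.2, show 1 - p.2 ≤ 1 - U p.1 by linarith [hp.2]⟩
    refine ((continuousOn_const (c := (1 : ℝ))).sub hdual).congr fun p hp => ?_
    show localUtility U xs xl p.1 p.2 = 1 - localUtility (fun x => 1 - U x) xl xs p.1 (1 - p.2)
    rw [hU.localUtility_dual hp.1.1]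
    ring

end IsCalibratedUtility

end LocalUtility

theorem dekel_representation_general
    {E : Type*} [AddCommGroup E] [Module ℝ E] [TopologicalSpace E]
    [IsTopologicalAddGroup E] [ContinuousSMul ℝ E]
    (X : Set E) (hXconv : Convex ℝ X) (hXcomp : IsCompact X)
    (r : E → E → Prop)
    (hcomp : ∀ x ∈ X, ∀ y ∈ X, r x y ∨ r y x)
    (htrans : ∀ x ∈ X, ∀ y ∈ X, ∀ z ∈ X, r x y → r y z → r x z)
    (hclosed : ∀ y ∈ X, IsClosed {x ∈ X | r x y} ∧ IsClosed {x ∈ X | r y x})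
    (hbet : ∀ x ∈ X, ∀ y ∈ X, ∀ l ∈ Ioo (0:ℝ) 1,
      (r x y ∧ ¬ r y x) →
        ((r x (l • x + (1 - l) • y) ∧ ¬ r (l • x + (1 - l) • y) x) ∧
         (r (l • x + (1 - l) • y) y ∧ ¬ r y (l • x + (1 - l) • y))))
    (hnond : ∃ x ∈ X, ∃ y ∈ X, r x y ∧ ¬ r y x) :
    ∃ u : E → ℝ → ℝ,
      -- (i) mixture linearity and continuity in the first argument
      (∀ t ∈ Ioo (0:ℝ) 1, ContinuousOn (fun x => u x t) X ∧
        ∀ x ∈ X, ∀ y ∈ X, ∀ l ∈ Icc (0:ℝ) 1,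
          u (l • x + (1 - l) • y) t = l * u x t + (1 - l) * u y t) ∧
      -- (ii) continuity in the second argument
      (∀ x ∈ X, ContinuousOn (u x) (Ioo (0:ℝ) 1)) ∧
      -- (iii) normalization
      (∃ xstar ∈ X, ∃ xlow ∈ X,
        ∀ t ∈ Icc (0:ℝ) 1, u xstar t = 1 ∧ u xlow t = 0) ∧
      -- (iv) unique fixed point
      (∀ x ∈ X, ∃! t : ℝ, t ∈ Icc (0:ℝ) 1 ∧ t = u x t) ∧
      -- (v) the implicit utility is continuous and represents the relation
      (∃ U : E → ℝ, ContinuousOn U X ∧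
        (∀ x ∈ X, U x = u x (U x)) ∧
        (∀ x ∈ X, ∀ y ∈ X, (r x y ↔ U x ≥ U y))) := by
  have hr : IsContinuousWeakOrder X r :=
    ⟨hcomp, htrans, fun y hy => (hclosed y hy).1, fun y hy => (hclosed y hy).2⟩
  obtain ⟨U, xs, xl, hU, hrep⟩ := hr.exists_isCalibratedUtility hXconv hXcomp hbet hnond
  refine ⟨localUtility U xs xl,
    fun t ht => ⟨?_, fun x hx y hy l hl => hU.localUtility_mix hx hy ht hl⟩,
    fun x hx => ?_, ⟨xs, hU.high_mem, xl, hU.low_mem,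
      fun t ht => ⟨hU.localUtility_high ht, hU.localUtility_low ht⟩⟩,
    fun x hx => ⟨U x, ⟨hU.mapsTo hx, (hU.localUtility_self hx).symm⟩,
      fun t ht => (hU.eq_of_localUtility_eq hx ht.2.symm).symm⟩,
    U, hU.continuousOn, fun x hx => (hU.localUtility_self hx).symm, hrep⟩
  · exact hU.continuousOn_localUtility.comp (f := fun x => (x, t))
      (Continuous.continuousOn (by fun_prop)) fun x hx => ⟨hx, ht⟩
  · exact hU.continuousOn_localUtility.comp (f := fun t => (x, t))
      (Continuous.continuousOn (by fun_prop)) fun t ht => ⟨hx, ht⟩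

theorem dekel_representation
    {E : Type*} [AddCommGroup E] [Module ℝ E] [TopologicalSpace E]
    [IsTopologicalAddGroup E] [ContinuousSMul ℝ E] [T2Space E]
    (X : Set E) (hXne : X.Nonempty) (hXconv : Convex ℝ X) (hXcomp : IsCompact X)
    (r : E → E → Prop)
    (hcomp : ∀ x ∈ X, ∀ y ∈ X, r x y ∨ r y x)
    (htrans : ∀ x ∈ X, ∀ y ∈ X, ∀ z ∈ X, r x y → r y z → r x z)
    (hclosed : ∀ y ∈ X, IsClosed {x ∈ X | r x y} ∧ IsClosed {x ∈ X | r y x})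
    (hbet : ∀ x ∈ X, ∀ y ∈ X, ∀ l ∈ Ioo (0:ℝ) 1,
      (r x y ∧ ¬ r y x) →
        ((r x (l • x + (1 - l) • y) ∧ ¬ r (l • x + (1 - l) • y) x) ∧
         (r (l • x + (1 - l) • y) y ∧ ¬ r y (l • x + (1 - l) • y))))
    (hnond : ∃ x ∈ X, ∃ y ∈ X, r x y ∧ ¬ r y x) :
    ∃ u : E → ℝ → ℝ,
      -- (i) mixture linearity and continuity in the first argument
      (∀ t ∈ Ioo (0:ℝ) 1, ContinuousOn (fun x => u x t) X ∧
        ∀ x ∈ X, ∀ y ∈ X, ∀ l ∈ Icc (0:ℝ) 1,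
          u (l • x + (1 - l) • y) t = l * u x t + (1 - l) * u y t) ∧
      -- (ii) continuity in the second argument
      (∀ x ∈ X, ContinuousOn (u x) (Ioo (0:ℝ) 1)) ∧
      -- (iii) normalization
      (∃ xstar ∈ X, ∃ xlow ∈ X,
        ∀ t ∈ Icc (0:ℝ) 1, u xstar t = 1 ∧ u xlow t = 0) ∧
      -- (iv) unique fixed point
      (∀ x ∈ X, ∃! t : ℝ, t ∈ Icc (0:ℝ) 1 ∧ t = u x t) ∧
      -- (v) the implicit utility is continuous and represents the relation
      (∃ U : E → ℝ, ContinuousOn U X ∧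
        (∀ x ∈ X, U x = u x (U x)) ∧
        (∀ x ∈ X, ∀ y ∈ X, (r x y ↔ U x ≥ U y))) :=
  dekel_representation_general X hXconv hXcomp r hcomp htrans hclosed hbet hnond
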